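/- arXiv:1812.01508 — 3 statements merged into one kernel-verified Lean document; each statement's English description precedes it below -/
import Mathlib

section
/- The linear map from ℝ⁷ to ℝ⁶ sending (c₄₂₁, c₄₂₂, c₄₂₃, c₄₄₂, c₄₄₃, c₄₄₄, c₄₄₅) to (A₊, A₋, B₊, B₋, C, D), where A_± = (35/8)(c₄₂₂ − c₄₂₁) ± 3π c₄₂₃ + 45 c₄₄₅, B_± = (35/8) c₄₂₃ ± 3π(c₄₂₁ − c₄₂₂) + 45 c₄₄₄, C = 36 c₄₄₃, D = −36 c₄₄₂, is surjective. -/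
open Real

/-- the linear map ℝ⁷ → ℝ⁶,
(c₄₂₁, c₄₂₂, c₄₂₃, c₄₄₂, c₄₄₃, c₄₄₄, c₄₄₅) ↦ (A₊, A₋, B₊, B₋, C, D) with
A_± = (35/8)(c₄₂₂ − c₄₂₁) ± 3π c₄₂₃ + 45 c₄₄₅,
B_± = (35/8) c₄₂₃ ± 3π(c₄₂₁ − c₄₂₂) + 45 c₄₄₄, C = 36 c₄₄₃, D = −36 c₄₄₂,
is surjective. -/
theorem stmt6 :
    Function.Surjective (fun c : ℝ × ℝ × ℝ × ℝ × ℝ × ℝ × ℝ =>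
      letI c421 := c.1; letI c422 := c.2.1; letI c423 := c.2.2.1
      letI c442 := c.2.2.2.1; letI c443 := c.2.2.2.2.1
      letI c444 := c.2.2.2.2.2.1; letI c445 := c.2.2.2.2.2.2
      ((35 / 8) * (c422 - c421) + 3 * π * c423 + 45 * c445,
       (35 / 8) * (c422 - c421) - 3 * π * c423 + 45 * c445,
       (35 / 8) * c423 + 3 * π * (c421 - c422) + 45 * c444,
       (35 / 8) * c423 - 3 * π * (c421 - c422) + 45 * c444,
       36 * c443,
       -36 * c442) : ℝ × ℝ × ℝ × ℝ × ℝ × ℝ × ℝ → ℝ × ℝ × ℝ × ℝ × ℝ × ℝ) := by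
  rintro ⟨a, b, p, q, e, f⟩
  have hπ : (π : ℝ) ≠ 0 := Real.pi_ne_zero
  set x : ℝ := (q - p) / (6 * π) with hx
  set y : ℝ := (a - b) / (6 * π) with hy
  refine ⟨(0, x, y, -f / 36, e / 36,
    (p - (35 / 8) * y + 3 * π * x) / 45,
    (a - (35 / 8) * x - 3 * π * y) / 45), ?_⟩
  simp only [hx, hy]
  refine Prod.ext ?_ (Prod.ext ?_ (Prod.ext ?_ (Prod.ext ?_ (Prod.ext ?_ ?_)))) <;>
    · show _ = _
      field_simp
      try ring
end

section
/- For the Heisenberg geodesic with initial covector (cos φ, sin φ, r), r > 0, the first conjugate time equals 2π/r: the differential of the exponential map E₀(t, φ, r) = (x(t,φ,r), y(t,φ,r), w(t,φ,r)) (with x, y, w as in the explicit Heisenberg geodesic formulas) is singular at t = 2π/r and nonsingular for 0 < t < 2π/r. -/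
open Real

/-- The Heisenberg exponential map from the origin, in coordinates (t, φ, r). -/
noncomputable def heisExp : ℝ × ℝ × ℝ → ℝ × ℝ × ℝ := fun p =>
  letI t := p.1; letI φ := p.2.1; letI r := p.2.2
  ((Real.sin (r * t + φ) - Real.sin φ) / r,
   (Real.cos φ - Real.cos (r * t + φ)) / r,
   (r * t - Real.sin (r * t)) / (2 * r ^ 2))

/-! The Jacobian determinant of `heisExp` is computed in closed form: it equals
`(2 - 2 cos (r t) - r t sin (r t)) / r ^ 4`, independently of `φ` because rotating `φ` rotates the
`(x, y)`-plane. It vanishes at `r t = 2π`. For `s = 2x ∈ (0, 2π)` one has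
`2 - 2 cos s - s sin s = 4 sin x (sin x - x cos x)`, which is positive because `x < tan x`
on `(0, π/2)` and `cos x ≤ 0` on `[π/2, π)`. -/

namespace Module.Basis

variable (R : Type*) [Semiring R]

noncomputable def finThreeProd : Basis (Fin 3) R (R × R × R) :=
  Basis.ofEquivFun (((LinearEquiv.refl R R).prodCongr (LinearEquiv.finTwoArrow R R).symm).trans
    (Fin.consLinearEquiv R fun _ ↦ R))

theorem coe_finThreeProd : ⇑(finThreeProd R) = ![(1, 0, 0), (0, 1, 0), (0, 0, 1)] := by
  ext i : 1
  fin_cases i <;> simp [finThreeProd, LinearEquiv.finTwoArrow, Fin.tail]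

theorem coe_finThreeProd_repr (x : R × R × R) :
    ⇑((finThreeProd R).repr x) = ![x.1, x.2.1, x.2.2] := by
  ext i
  fin_cases i <;> simp [finThreeProd, LinearEquiv.finTwoArrow]

end Module.Basis

theorem LinearMap.det_prod_prod {R : Type*} [CommRing R]
    (f : (R × R × R) →ₗ[R] (R × R × R)) :
    LinearMap.det f =
      (f (1, 0, 0)).1 *
          ((f (0, 1, 0)).2.1 * (f (0, 0, 1)).2.2 - (f (0, 0, 1)).2.1 * (f (0, 1, 0)).2.2)
        - (f (0, 1, 0)).1 *
          ((f (1, 0, 0)).2.1 * (f (0, 0, 1)).2.2 - (f (0, 0, 1)).2.1 * (f (1, 0, 0)).2.2)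
        + (f (0, 0, 1)).1 *
          ((f (1, 0, 0)).2.1 * (f (0, 1, 0)).2.2 - (f (0, 1, 0)).2.1 * (f (1, 0, 0)).2.2) := by
  rw [← LinearMap.det_toMatrix (Module.Basis.finThreeProd R), Matrix.det_fin_three]
  simp [LinearMap.toMatrix_apply, Module.Basis.coe_finThreeProd_repr, Module.Basis.coe_finThreeProd]
  ring

theorem HasFDerivAt.apply_eq_of_hasDerivAt_comp {𝕜 E F : Type*} [NontriviallyNormedField 𝕜]
    [NormedAddCommGroup E] [NormedSpace 𝕜 E] [NormedAddCommGroup F] [NormedSpace 𝕜 F]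
    {f : E → F} {f' : E →L[𝕜] F} {γ : 𝕜 → E} {v : E} {w : F} {s : 𝕜}
    (hf : HasFDerivAt f f' (γ s)) (hγ : HasDerivAt γ v s)
    (h : HasDerivAt (fun x ↦ f (γ x)) w s) :
    f' v = w :=
  (hf.comp_hasDerivAt s hγ).unique h

section heisExp

variable {t φ r : ℝ}

theorem differentiableAt_heisExp (hr : r ≠ 0) : DifferentiableAt ℝ heisExp (t, φ, r) := by
  unfold heisExp
  fun_prop (disch := positivity)

theorem hasDerivAt_heisExp_time (hr : r ≠ 0) :
    HasDerivAt (fun s ↦ heisExp (s, φ, r))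
      (cos (r * t + φ), sin (r * t + φ), (1 - cos (r * t)) / (2 * r)) t := by
  have hv : HasDerivAt (fun s ↦ r * s) r t := by simpa using (hasDerivAt_id t).const_mul r
  have hu : HasDerivAt (fun s ↦ r * s + φ) r t := hv.add_const φ
  have hx : HasDerivAt (fun s ↦ (sin (r * s + φ) - sin φ) / r) (cos (r * t + φ)) t :=
    ((hu.sin.sub_const _).div_const r).congr_deriv (by field_simp)
  have hy : HasDerivAt (fun s ↦ (cos φ - cos (r * s + φ)) / r) (sin (r * t + φ)) t :=
    ((hu.cos.const_sub _).div_const r).congr_deriv (by field_simp)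
  have hw : HasDerivAt (fun s ↦ (r * s - sin (r * s)) / (2 * r ^ 2))
      ((1 - cos (r * t)) / (2 * r)) t :=
    ((hv.sub hv.sin).div_const _).congr_deriv (by field_simp)
  exact hx.prodMk (hy.prodMk hw)

theorem hasDerivAt_heisExp_angle :
    HasDerivAt (fun ψ ↦ heisExp (t, ψ, r))
      ((cos (r * t + φ) - cos φ) / r, (sin (r * t + φ) - sin φ) / r, 0) φ := by
  have hu : HasDerivAt (fun ψ ↦ r * t + ψ) 1 φ := (hasDerivAt_id φ).const_add _
  have hx : HasDerivAt (fun ψ ↦ (sin (r * t + ψ) - sin ψ) / r)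
      ((cos (r * t + φ) - cos φ) / r) φ :=
    ((hu.sin.sub (hasDerivAt_sin φ)).div_const r).congr_deriv (by simp)
  have hy : HasDerivAt (fun ψ ↦ (cos ψ - cos (r * t + ψ)) / r)
      ((sin (r * t + φ) - sin φ) / r) φ :=
    (((hasDerivAt_cos φ).sub hu.cos).div_const r).congr_deriv (by ring)
  exact hx.prodMk (hy.prodMk (hasDerivAt_const φ ((r * t - sin (r * t)) / (2 * r ^ 2))))

theorem hasDerivAt_heisExp_rate (hr : r ≠ 0) :
    HasDerivAt (fun ρ ↦ heisExp (t, φ, ρ))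
      (t * cos (r * t + φ) / r - (sin (r * t + φ) - sin φ) / r ^ 2,
       t * sin (r * t + φ) / r - (cos φ - cos (r * t + φ)) / r ^ 2,
       t * (1 - cos (r * t)) / (2 * r ^ 2) - (r * t - sin (r * t)) / r ^ 3) r := by
  have hv : HasDerivAt (fun ρ ↦ ρ * t) t r := by simpa using (hasDerivAt_id r).mul_const t
  have hu : HasDerivAt (fun ρ ↦ ρ * t + φ) t r := hv.add_const φ
  have hq : HasDerivAt (fun ρ : ℝ ↦ 2 * ρ ^ 2) (4 * r) r :=
    ((hasDerivAt_pow 2 r).const_mul 2).congr_deriv (by ring)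
  have hx : HasDerivAt (fun ρ ↦ (sin (ρ * t + φ) - sin φ) / ρ)
      (t * cos (r * t + φ) / r - (sin (r * t + φ) - sin φ) / r ^ 2) r :=
    ((hu.sin.sub_const _).div (hasDerivAt_id r) hr).congr_deriv (by simp only [id]; field_simp)
  have hy : HasDerivAt (fun ρ ↦ (cos φ - cos (ρ * t + φ)) / ρ)
      (t * sin (r * t + φ) / r - (cos φ - cos (r * t + φ)) / r ^ 2) r :=
    ((hu.cos.const_sub _).div (hasDerivAt_id r) hr).congr_deriv (by simp only [id]; field_simp)
  have hw : HasDerivAt (fun ρ ↦ (ρ * t - sin (ρ * t)) / (2 * ρ ^ 2))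
      (t * (1 - cos (r * t)) / (2 * r ^ 2) - (r * t - sin (r * t)) / r ^ 3) r :=
    ((hv.sub hv.sin).div hq (by positivity)).congr_deriv
      (by simp only [Pi.sub_apply]; field_simp; ring)
  exact hx.prodMk (hy.prodMk hw)

theorem det_fderiv_heisExp (hr : r ≠ 0) :
    LinearMap.det (fderiv ℝ heisExp (t, φ, r)).toLinearMap =
      (2 - 2 * cos (r * t) - r * t * sin (r * t)) / r ^ 4 := by
  have hE := (differentiableAt_heisExp (t := t) (φ := φ) hr).hasFDerivAt
  have hT : HasDerivAt (fun s ↦ (s, φ, r)) ((1 : ℝ), (0 : ℝ), (0 : ℝ)) t :=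
    (hasDerivAt_id t).prodMk ((hasDerivAt_const t φ).prodMk (hasDerivAt_const t r))
  have hΦ : HasDerivAt (fun ψ ↦ (t, ψ, r)) ((0 : ℝ), (1 : ℝ), (0 : ℝ)) φ :=
    (hasDerivAt_const φ t).prodMk ((hasDerivAt_id φ).prodMk (hasDerivAt_const φ r))
  have hR : HasDerivAt (fun ρ ↦ (t, φ, ρ)) ((0 : ℝ), (0 : ℝ), (1 : ℝ)) r :=
    (hasDerivAt_const r t).prodMk ((hasDerivAt_const r φ).prodMk (hasDerivAt_id r))
  rw [LinearMap.det_prod_prod]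
  simp only [ContinuousLinearMap.coe_coe,
    hE.apply_eq_of_hasDerivAt_comp hT (hasDerivAt_heisExp_time hr),
    hE.apply_eq_of_hasDerivAt_comp hΦ hasDerivAt_heisExp_angle,
    hE.apply_eq_of_hasDerivAt_comp hR (hasDerivAt_heisExp_rate hr)]
  -- `φ` enters only through `sin`/`cos` of `(r t + φ) - φ` and the Pythagorean identities.
  have hsin : sin (r * t + φ) * cos φ - cos (r * t + φ) * sin φ = sin (r * t) := by
    rw [← sin_sub, add_sub_cancel_right]
  have hcos : cos (r * t + φ) * cos φ + sin (r * t + φ) * sin φ = cos (r * t) := by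
    rw [← cos_sub, add_sub_cancel_right]
  linear_combination (norm := (field_simp; ring))
    (sin (r * t) - r * t) / r ^ 4 * hsin
    + (1 - cos (r * t)) / (2 * r ^ 4) *
      (sin_sq_add_cos_sq (r * t + φ) + sin_sq_add_cos_sq φ - 2 * hcos)
    + 1 / r ^ 4 * sin_sq_add_cos_sq (r * t)

end heisExp

theorem Real.mul_cos_lt_sin {x : ℝ} (h0 : 0 < x) (hπ : x < π) : x * cos x < sin x := by
  rcases le_or_gt (cos x) 0 with hcos | hcos
  · nlinarith [sin_pos_of_pos_of_lt_pi h0 hπ]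
  · have hx : x < π / 2 := by
      by_contra! hx
      exact hcos.not_ge (cos_nonpos_of_pi_div_two_le_of_le hx (by linarith [pi_pos]))
    have := lt_tan h0 hx
    rwa [tan_eq_sin_div_cos, lt_div_iff₀ hcos] at this

theorem Real.two_sub_two_mul_cos_sub_mul_sin_pos {s : ℝ} (h0 : 0 < s) (h2π : s < 2 * π) :
    0 < 2 - 2 * cos s - s * sin s := by
  obtain ⟨x, rfl⟩ : ∃ x, s = 2 * x := ⟨s / 2, by ring⟩
  have hsin : 0 < sin x := sin_pos_of_pos_of_lt_pi (by linarith) (by linarith)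
  have hgap : 0 < sin x - x * cos x := sub_pos.2 (mul_cos_lt_sin (by linarith) (by linarith))
  have hfactor :
      2 - 2 * cos (2 * x) - 2 * x * sin (2 * x) = 4 * sin x * (sin x - x * cos x) := by
    rw [cos_two_mul, sin_two_mul]
    linear_combination -4 * sin_sq_add_cos_sq x
  rw [hfactor]
  positivity

/-- for r > 0, the first conjugate time of the Heisenberg geodesic with
initial covector (cos φ, sin φ, r) is 2π/r: the differential of the exponential map
is singular at t = 2π/r and nonsingular for 0 < t < 2π/r. -/
theorem stmt17 (φ r : ℝ) (hr : r > 0) :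
    (LinearMap.det (fderiv ℝ heisExp (2 * π / r, φ, r)).toLinearMap = 0) ∧
    (∀ t : ℝ, 0 < t → t < 2 * π / r →
      LinearMap.det (fderiv ℝ heisExp (t, φ, r)).toLinearMap ≠ 0) := by
  refine ⟨?_, fun t ht htr ↦ ?_⟩
  · rw [det_fderiv_heisExp hr.ne', mul_div_cancel₀ _ hr.ne']
    simp
  · rw [det_fderiv_heisExp hr.ne']
    have hrt : r * t < 2 * π := by rwa [lt_div_iff₀ hr, mul_comm] at htr
    exact (div_pos (two_sub_two_mul_cos_sub_mul_sin_pos (mul_pos hr ht) hrt) (by positivity)).ne'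
end

section
/- The image of the Heisenberg exponential map at the first conjugate time is the w-axis minus the origin: for every r ≠ 0 and every φ, E₀(2π/|r|, φ, r) = (0, 0, sign(r)·π/r²), so the Heisenberg conjugate locus from the origin is {(0,0,w) : w ≠ 0}. -/
open Real

lemma hmain (r φ : ℝ) (hr : r ≠ 0) :
    heisExp (2 * π / |r|, φ, r) = (0, 0, Real.sign r * π / r ^ 2) := by
  unfold heisExp
  rcases hr.lt_or_gt with h | h
  · have habs : |r| = -r := abs_of_neg h
    have ht : r * (2 * π / |r|) = -(2 * π) := by
      rw [habs, div_neg, mul_neg, neg_eq_iff_eq_neg, neg_neg, mul_div_assoc', mul_comm,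
        mul_div_assoc, div_self hr, mul_one]
    rw [Real.sign_of_neg h]
    simp only [ht]
    have h1 : Real.sin (-(2*π) + φ) = Real.sin φ := by
      rw [show -(2*π) + φ = φ - 2*π by ring, Real.sin_sub_two_pi]
    have h2 : Real.cos (-(2*π) + φ) = Real.cos φ := by
      rw [show -(2*π) + φ = φ - 2*π by ring, Real.cos_sub_two_pi]
    have h3 : Real.sin (-(2*π)) = 0 := by simp [Real.sin_two_pi]
    rw [h1, h2, h3]
    have hr2 : r^2 ≠ 0 := pow_ne_zero _ h.ne
    simp only [Prod.mk.injEq]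
    refine ⟨by simp, by simp, ?_⟩
    rw [div_eq_div_iff (by positivity) hr2]; ring
  · have habs : |r| = r := abs_of_pos h
    have ht : r * (2 * π / |r|) = 2 * π := by
      rw [habs, mul_div_assoc', mul_comm, mul_div_assoc, div_self hr, mul_one]
    rw [Real.sign_of_pos h]
    simp only [ht]
    have h1 : Real.sin (2*π + φ) = Real.sin φ := by
      rw [show 2*π + φ = φ + 2*π by ring, Real.sin_add_two_pi]
    have h2 : Real.cos (2*π + φ) = Real.cos φ := by
      rw [show 2*π + φ = φ + 2*π by ring, Real.cos_add_two_pi]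
    rw [h1, h2, Real.sin_two_pi]
    have hr2 : r^2 ≠ 0 := pow_ne_zero _ h.ne'
    simp only [Prod.mk.injEq]
    refine ⟨by simp, by simp, ?_⟩
    rw [div_eq_div_iff (by positivity) hr2]; ring

/-- for every r ≠ 0 and φ, E₀(2π/|r|, φ, r) = (0, 0, sign(r)·π/r²), and
the Heisenberg conjugate locus from the origin (the image of the exponential map at the
first conjugate time 2π/|r|) is the w-axis minus the origin. -/
theorem stmt18 :
    (∀ r φ : ℝ, r ≠ 0 →
      heisExp (2 * π / |r|, φ, r) = (0, 0, Real.sign r * π / r ^ 2)) ∧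
    {p : ℝ × ℝ × ℝ | ∃ r φ : ℝ, r ≠ 0 ∧ p = heisExp (2 * π / |r|, φ, r)} =
      {p : ℝ × ℝ × ℝ | p.1 = 0 ∧ p.2.1 = 0 ∧ p.2.2 ≠ 0} := by
  refine ⟨hmain, ?_⟩
  ext ⟨x, y, w⟩
  simp only [Set.mem_setOf_eq]
  constructor
  · rintro ⟨r, φ, hr, hp⟩
    rw [hmain r φ hr] at hp
    injection hp with h1 h2
    injection h2 with h2 h3
    subst h1 h2 h3
    exact ⟨rfl, rfl, div_ne_zero (mul_ne_zero (fun hs => hr (Real.sign_eq_zero_iff.mp hs)) pi_ne_zero)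
      (pow_ne_zero _ hr)⟩
  · rintro ⟨rfl, rfl, hw⟩
    rcases hw.lt_or_gt with h | h
    · refine ⟨-Real.sqrt (π / (-w)), 0, ?_, ?_⟩
      · have : Real.sqrt (π / (-w)) > 0 := Real.sqrt_pos.mpr (div_pos pi_pos (neg_pos.mpr h))
        linarith
      · have hpos : Real.sqrt (π / (-w)) > 0 := Real.sqrt_pos.mpr (div_pos pi_pos (neg_pos.mpr h))
        rw [hmain _ 0 (by linarith)]
        have : (-Real.sqrt (π / (-w)))^2 = π / (-w) := by
          rw [neg_pow, Real.sq_sqrt (le_of_lt (div_pos pi_pos (neg_pos.mpr h)))]; ring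
        rw [Real.sign_of_neg (by linarith), this]
        have : (-1 : ℝ) * π / (π / (-w)) = w := by field_simp
        rw [this]
    · refine ⟨Real.sqrt (π / w), 0, ?_, ?_⟩
      · exact (Real.sqrt_pos.mpr (div_pos pi_pos h)).ne'
      · have hpos : Real.sqrt (π / w) > 0 := Real.sqrt_pos.mpr (div_pos pi_pos h)
        rw [hmain _ 0 hpos.ne']
        rw [Real.sign_of_pos hpos, Real.sq_sqrt (le_of_lt (div_pos pi_pos h))]
        have : (1 : ℝ) * π / (π / w) = w := by field_simp
        rw [this]
end
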